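/- Under the hypotheses of the stochastic equation θ =_d BY + (1-B)θ with B, Y, θ independent, B ∈ (0,1), E[Y^2] < ∞ and E[θ^2] < ∞: E[θ] = E[Y], and Var(θ) = (E[B^2]/(1 - E[(1-B)^2])) · Var(Y). -/

import Mathlib

/-!
Taking expectations in the fixed-point equation gives `E θ = E B · E Y + (1 - E B) · E θ`, and
`E B > 0` forces `E θ = E Y =: m`. After centering at `m`, `θ - m` has the law of
`B (Y - m) + (1 - B) (θ - m)`; squaring and using independence, the cross term carries the factor
`E (Y - m) = 0`, so `Var θ = E B² · Var Y + E (1 - B)² · Var θ`, and `E (1 - B)² < 1` since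
`0 < B < 1`.
-/

open MeasureTheory ProbabilityTheory

section Mixture

variable {Ω : Type*} [MeasurableSpace Ω] {μ : Measure Ω}

lemma integral_pos_of_ae_pos [NeZero μ] {f : Ω → ℝ} (hf : ∀ᵐ ω ∂μ, 0 < f ω)
    (hfi : Integrable f μ) : 0 < ∫ ω, f ω ∂μ := by
  refine (integral_nonneg_of_ae (hf.mono fun _ h => h.le)).lt_of_ne fun h => ?_
  obtain ⟨ω, hω0, hωpos⟩ :=
    (((integral_eq_zero_iff_of_nonneg_ae (hf.mono fun _ h => h.le) hfi).1 h.symm).and hf).exists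
  exact hωpos.ne' hω0

lemma ae_norm_le_one_of_mem_Icc {f : Ω → ℝ} (hf01 : ∀ᵐ ω ∂μ, f ω ∈ Set.Icc (0 : ℝ) 1) :
    ∀ᵐ ω ∂μ, ‖f ω‖ ≤ 1 :=
  hf01.mono fun _ h => by rw [Real.norm_eq_abs, abs_le]; constructor <;> linarith [h.1, h.2]

variable {B U V : Ω → ℝ}

lemma integral_mix [IsProbabilityMeasure μ] (hB : AEMeasurable B μ)
    (hB01 : ∀ᵐ ω ∂μ, B ω ∈ Set.Icc (0 : ℝ) 1) (hBU : IndepFun B U μ) (hBV : IndepFun B V μ)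
    (hU : Integrable U μ) (hV : Integrable V μ) :
    ∫ ω, (B ω * U ω + (1 - B ω) * V ω) ∂μ
      = (∫ ω, B ω ∂μ) * (∫ ω, U ω ∂μ) + (1 - ∫ ω, B ω ∂μ) * ∫ ω, V ω ∂μ := by
  have hBi : Integrable B μ :=
    .of_bound hB.aestronglyMeasurable 1 (ae_norm_le_one_of_mem_Icc hB01)
  have hBUi : Integrable (fun ω => B ω * U ω) μ :=
    hU.bdd_mul hB.aestronglyMeasurable (ae_norm_le_one_of_mem_Icc hB01)
  have hBVi : Integrable (fun ω => (1 - B ω) * V ω) μ :=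
    hV.bdd_mul (by fun_prop) (ae_norm_le_one_of_mem_Icc <|
      hB01.mono fun _ h => ⟨by linarith [h.2], by linarith [h.1]⟩)
  have hfacU : ∫ ω, B ω * U ω ∂μ = (∫ ω, B ω ∂μ) * ∫ ω, U ω ∂μ :=
    hBU.integral_fun_mul_eq_mul_integral hB.aestronglyMeasurable hU.aestronglyMeasurable
  have hfacV : ∫ ω, (1 - B ω) * V ω ∂μ = (∫ ω, (1 - B ω) ∂μ) * ∫ ω, V ω ∂μ :=
    hBV.integral_fun_comp_mul_comp (f := fun b => 1 - b) (g := fun v => v) hB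
      hV.aemeasurable (by fun_prop) (by fun_prop)
  rw [integral_add hBUi hBVi, hfacU, hfacV, integral_sub (integrable_const 1) hBi]
  simp

lemma integral_mix_sq [IsProbabilityMeasure μ] (hB : AEMeasurable B μ)
    (hB01 : ∀ᵐ ω ∂μ, B ω ∈ Set.Icc (0 : ℝ) 1) (hU : MemLp U 2 μ) (hV : MemLp V 2 μ)
    (hind : iIndepFun ![B, U, V] μ) :
    ∫ ω, (B ω * U ω + (1 - B ω) * V ω) ^ 2 ∂μ
      = (∫ ω, B ω ^ 2 ∂μ) * (∫ ω, U ω ^ 2 ∂μ)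
        + 2 * (∫ ω, B ω * (1 - B ω) ∂μ) * (∫ ω, U ω ∂μ) * (∫ ω, V ω ∂μ)
        + (∫ ω, (1 - B ω) ^ 2 ∂μ) * ∫ ω, V ω ^ 2 ∂μ := by
  have hmeas : ∀ i, AEMeasurable (![B, U, V] i) μ := by
    intro i; fin_cases i
    exacts [hB, hU.aestronglyMeasurable.aemeasurable, hV.aestronglyMeasurable.aemeasurable]
  have hBU : IndepFun B U μ := by simpa using hind.indepFun (show (0 : Fin 3) ≠ 1 by decide)
  have hBV : IndepFun B V μ := by simpa using hind.indepFun (show (0 : Fin 3) ≠ 2 by decide)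
  have hUU : Integrable (fun ω => U ω ^ 2) μ := hU.integrable_sq
  have hUV : Integrable (fun ω => U ω * V ω) μ := hU.integrable_mul hV
  have hVV : Integrable (fun ω => V ω ^ 2) μ := hV.integrable_sq
  have I1 : Integrable (fun ω => B ω ^ 2 * U ω ^ 2) μ :=
    hUU.bdd_mul (by fun_prop) (ae_norm_le_one_of_mem_Icc <|
      hB01.mono fun _ h => ⟨by positivity, by nlinarith [h.1, h.2]⟩)
  have I2 : Integrable (fun ω => B ω * (1 - B ω) * (U ω * V ω)) μ :=
    hUV.bdd_mul (by fun_prop) (ae_norm_le_one_of_mem_Icc <|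
      hB01.mono fun _ h => ⟨by nlinarith [h.1, h.2], by nlinarith [h.1, h.2]⟩)
  have I3 : Integrable (fun ω => (1 - B ω) ^ 2 * V ω ^ 2) μ :=
    hVV.bdd_mul (by fun_prop) (ae_norm_le_one_of_mem_Icc <|
      hB01.mono fun _ h => ⟨by positivity, by nlinarith [h.1, h.2]⟩)
  have hfac1 : ∫ ω, B ω ^ 2 * U ω ^ 2 ∂μ = (∫ ω, B ω ^ 2 ∂μ) * ∫ ω, U ω ^ 2 ∂μ :=
    hBU.integral_fun_comp_mul_comp (f := fun b => b ^ 2) (g := fun u => u ^ 2) hB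
      (hmeas 1) (by fun_prop) (by fun_prop)
  have hfac2 : ∫ ω, B ω * (1 - B ω) * (U ω * V ω) ∂μ
      = (∫ ω, B ω * (1 - B ω) ∂μ) * (∫ ω, U ω ∂μ) * ∫ ω, V ω ∂μ := by
    have := hind.integral_fun_prod_comp (f := ![fun b => b * (1 - b), fun u => u, fun v => v])
      hmeas (fun i => by fin_cases i <;> simp <;> fun_prop)
    simpa [Fin.prod_univ_three, mul_assoc] using this
  have hfac3 : ∫ ω, (1 - B ω) ^ 2 * V ω ^ 2 ∂μ = (∫ ω, (1 - B ω) ^ 2 ∂μ) * ∫ ω, V ω ^ 2 ∂μ :=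
    hBV.integral_fun_comp_mul_comp (f := fun b => (1 - b) ^ 2) (g := fun v => v ^ 2) hB
      (hmeas 2) (by fun_prop) (by fun_prop)
  calc ∫ ω, (B ω * U ω + (1 - B ω) * V ω) ^ 2 ∂μ
      = ∫ ω, (B ω ^ 2 * U ω ^ 2 + 2 * (B ω * (1 - B ω) * (U ω * V ω))
          + (1 - B ω) ^ 2 * V ω ^ 2) ∂μ := by congr with ω; ring
    _ = _ := by
      have I12 : Integrable (fun ω => B ω ^ 2 * U ω ^ 2
          + 2 * (B ω * (1 - B ω) * (U ω * V ω))) μ := I1.add (I2.const_mul 2)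
      rw [integral_add I12 I3, integral_add I1 (I2.const_mul 2), integral_const_mul,
        hfac1, hfac2, hfac3]
      ring

lemma variance_mix [IsProbabilityMeasure μ] (hB : AEMeasurable B μ)
    (hB01 : ∀ᵐ ω ∂μ, B ω ∈ Set.Icc (0 : ℝ) 1) (hU : MemLp U 2 μ) (hV : MemLp V 2 μ)
    (hind : iIndepFun ![B, U, V] μ) (hUV : ∫ ω, U ω ∂μ = ∫ ω, V ω ∂μ) :
    Var[fun ω => B ω * U ω + (1 - B ω) * V ω; μ]
      = (∫ ω, B ω ^ 2 ∂μ) * Var[U; μ] + (∫ ω, (1 - B ω) ^ 2 ∂μ) * Var[V; μ] := by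
  obtain ⟨m, hm⟩ : ∃ m, ∫ ω, U ω ∂μ = m := ⟨_, rfl⟩
  rw [hm] at hUV
  have hUae := hU.aestronglyMeasurable.aemeasurable
  have hVae := hV.aestronglyMeasurable.aemeasurable
  have hBU : IndepFun B U μ := by simpa using hind.indepFun (show (0 : Fin 3) ≠ 1 by decide)
  have hBV : IndepFun B V μ := by simpa using hind.indepFun (show (0 : Fin 3) ≠ 2 by decide)
  have hcentered : iIndepFun ![B, fun ω => U ω - m, fun ω => V ω - m] μ := by
    convert hind.comp ![fun b => b, fun u => u - m, fun v => v - m]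
      (fun i => by fin_cases i <;> simp <;> fun_prop) using 1
    funext i; fin_cases i <;> rfl
  have hmean : ∫ ω, (B ω * U ω + (1 - B ω) * V ω) ∂μ = m := by
    rw [integral_mix hB hB01 hBU hBV (hU.integrable one_le_two) (hV.integrable one_le_two), hm,
      ← hUV]
    ring
  have hcenter : ∫ ω, (U ω - m) ∂μ = 0 := by
    simp [integral_sub (hU.integrable one_le_two) (integrable_const m), hm]
  rw [variance_eq_integral (by fun_prop), hmean, variance_eq_integral hUae,
    variance_eq_integral hVae, hm, ← hUV]
  have hUc : MemLp (fun ω => U ω - m) 2 μ := hU.sub (memLp_const m)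
  have hVc : MemLp (fun ω => V ω - m) 2 μ := hV.sub (memLp_const m)
  calc ∫ ω, (B ω * U ω + (1 - B ω) * V ω - m) ^ 2 ∂μ
      = ∫ ω, (B ω * (U ω - m) + (1 - B ω) * (V ω - m)) ^ 2 ∂μ := by congr with ω; ring
    _ = _ := by
      rw [integral_mix_sq hB hB01 hUc hVc hcentered, hcenter]
      ring

lemma integral_one_sub_sq_lt_one [IsProbabilityMeasure μ] (hB : AEMeasurable B μ)
    (hB01 : ∀ᵐ ω ∂μ, B ω ∈ Set.Ioo (0 : ℝ) 1) : ∫ ω, (1 - B ω) ^ 2 ∂μ < 1 := by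
  have hint : Integrable (fun ω => (1 - B ω) ^ 2) μ :=
    .of_bound (by fun_prop) 1 (ae_norm_le_one_of_mem_Icc <|
      hB01.mono fun _ h => ⟨by positivity, by nlinarith [h.1, h.2]⟩)
  have hpos := integral_pos_of_ae_pos (f := fun ω => 1 - (1 - B ω) ^ 2)
    (hB01.mono fun _ h => by nlinarith [h.1, h.2]) ((integrable_const 1).sub hint)
  rw [integral_sub (integrable_const 1) hint] at hpos
  simpa using hpos

end Mixture

theorem stmt_3 {Ω : Type*} [MeasurableSpace Ω] (μ : Measure Ω) [IsProbabilityMeasure μ]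
    (B Y θ : Ω → ℝ) (hB : Measurable B) (hY : Measurable Y) (hθ : Measurable θ)
    (hrange : ∀ᵐ ω ∂μ, B ω ∈ Set.Ioo (0:ℝ) 1)
    (hindep : iIndepFun ![B, Y, θ] μ)
    (hdist : Measure.map θ μ = Measure.map (fun ω => B ω * Y ω + (1 - B ω) * θ ω) μ)
    (hY2 : Integrable (fun ω => Y ω ^ 2) μ) (hθ2 : Integrable (fun ω => θ ω ^ 2) μ) :
    (∫ ω, θ ω ∂μ = ∫ ω, Y ω ∂μ) ∧
    variance θ μ = (∫ ω, B ω ^ 2 ∂μ) / (1 - ∫ ω, (1 - B ω) ^ 2 ∂μ) * variance Y μ := by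
  have hB01 : ∀ᵐ ω ∂μ, B ω ∈ Set.Icc (0 : ℝ) 1 := hrange.mono fun _ h => Set.Ioo_subset_Icc_self h
  have hYL2 : MemLp Y 2 μ := (memLp_two_iff_integrable_sq hY.aestronglyMeasurable).2 hY2
  have hθL2 : MemLp θ 2 μ := (memLp_two_iff_integrable_sq hθ.aestronglyMeasurable).2 hθ2
  have hBY : IndepFun B Y μ := by simpa using hindep.indepFun (show (0 : Fin 3) ≠ 1 by decide)
  have hBθ : IndepFun B θ μ := by simpa using hindep.indepFun (show (0 : Fin 3) ≠ 2 by decide)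
  have hfix : IdentDistrib θ (fun ω => B ω * Y ω + (1 - B ω) * θ ω) μ μ :=
    ⟨hθ.aemeasurable, by fun_prop, hdist⟩
  have hmean : ∫ ω, θ ω ∂μ = ∫ ω, Y ω ∂μ := by
    have hfixmean := hfix.integral_eq
    rw [integral_mix hB.aemeasurable hB01 hBY hBθ (hYL2.integrable one_le_two)
      (hθL2.integrable one_le_two)] at hfixmean
    have hBpos : 0 < ∫ ω, B ω ∂μ := integral_pos_of_ae_pos (hrange.mono fun _ h => h.1)
      (.of_bound hB.aestronglyMeasurable 1 (ae_norm_le_one_of_mem_Icc hB01))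
    exact mul_left_cancel₀ hBpos.ne' (by linear_combination hfixmean)
  refine ⟨hmean, ?_⟩
  have hvar := hfix.variance_eq.trans
    (variance_mix hB.aemeasurable hB01 hYL2 hθL2 hindep hmean.symm)
  have hc := integral_one_sub_sq_lt_one hB.aemeasurable hrange
  rw [div_mul_eq_mul_div, eq_div_iff (sub_ne_zero.2 hc.ne')]
  linear_combination hvar
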